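/- With V_φψ(z) = exp(−(i/(2ℏ))p·x) U_φψ(z), the intertwining relation T_ph(z₀) ∘ V_φ = V_φ ∘ T_Sch(z₀) holds for every z₀ ∈ ℝ^{2n}, where T_ph(z₀)Ψ(z) = exp(−(i/(2ℏ))σ(z,z₀))Ψ(z−z₀) and T_Sch(z₀)ψ(x) = exp((i/ℏ)(p₀·x − ½p₀·x₀))ψ(x−x₀). -/
import Mathlib


open Complex Real MeasureTheory

/-- Standard symplectic form on ℝ²ⁿ = ℝⁿ × ℝⁿ. -/
noncomputable def symForm (n : ℕ) (z z' : (Fin n → ℝ) × (Fin n → ℝ)) : ℝ :=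
  (∑ i, z.2 i * z'.1 i) - (∑ i, z'.2 i * z.1 i)

/-- The transform `V_φψ(x,p) = e^{−ip·x/(2ℏ)} (2πℏ)^{−n/2} ∫ e^{(i/ℏ)p·(x−x')} φ(x−x')ψ(x')dx'`. -/
noncomputable def Vphi (n : ℕ) (hbar : ℝ) (φ ψ : (Fin n → ℝ) → ℂ)
    (z : (Fin n → ℝ) × (Fin n → ℝ)) : ℂ :=
  Complex.exp (-(I / (2 * (hbar : ℂ))) * ((∑ i, z.2 i * z.1 i : ℝ) : ℂ)) *
    ((((1 / (2 * π * hbar)) ^ ((n : ℝ) / 2) : ℝ) : ℂ) *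
      ∫ x' : Fin n → ℝ,
        Complex.exp ((I / (hbar : ℂ)) * ((∑ i, z.2 i * (z.1 i - x' i) : ℝ) : ℂ))
          * φ (z.1 - x') * ψ x')

/-- Phase-space Heisenberg–Weyl operator `T_ph(z₀)`. -/
noncomputable def Tph (n : ℕ) (hbar : ℝ) (z₀ : (Fin n → ℝ) × (Fin n → ℝ))
    (Ψ : (Fin n → ℝ) × (Fin n → ℝ) → ℂ) : (Fin n → ℝ) × (Fin n → ℝ) → ℂ :=
  fun z => Complex.exp (-(I / (2 * (hbar : ℂ))) * (symForm n z z₀ : ℂ)) * Ψ (z - z₀)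

/-- Schrödinger Heisenberg–Weyl operator `T_Sch(z₀)`. -/
noncomputable def TSch (n : ℕ) (hbar : ℝ) (z₀ : (Fin n → ℝ) × (Fin n → ℝ))
    (ψ : (Fin n → ℝ) → ℂ) : (Fin n → ℝ) → ℂ :=
  fun x => Complex.exp ((I / (hbar : ℂ)) *
      (((∑ i, z₀.2 i * x i) - (1 / 2) * ∑ i, z₀.2 i * z₀.1 i : ℝ) : ℂ))
    * ψ (x - z₀.1)

lemma helper_Vphi {n : ℕ} (eA eB eD C : ℂ) (f g : (Fin n → ℝ) → ℂ) (x₀ : Fin n → ℝ)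
    (h : ∀ x', eA * eB * f x' = eD * g (x' + x₀)) :
    eA * (eB * (C * ∫ x', f x')) = eD * (C * ∫ x', g x') := by
  calc eA * (eB * (C * ∫ x', f x'))
      = C * (eA * eB * ∫ x', f x') := by ring
    _ = C * ∫ x', eA * eB * f x' := by rw [integral_const_mul]
    _ = C * ∫ x', eD * g (x' + x₀) := by simp only [h]
    _ = C * (eD * ∫ x', g (x' + x₀)) := by rw [integral_const_mul]
    _ = C * (eD * ∫ x', g x') := by rw [integral_add_right_eq_self]
    _ = eD * (C * ∫ x', g x') := by ring

/-- The intertwining relation `T_ph(z₀) ∘ V_φ = V_φ ∘ T_Sch(z₀)`. -/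
theorem Tph_intertwines_Vphi (n : ℕ) (hbar : ℝ) (hhbar : 0 < hbar)
    (φ ψ : SchwartzMap (Fin n → ℝ) ℂ) (z₀ : (Fin n → ℝ) × (Fin n → ℝ)) :
    Tph n hbar z₀ (Vphi n hbar (⇑φ) (⇑ψ))
      = Vphi n hbar (⇑φ) (TSch n hbar z₀ (⇑ψ)) := by
  obtain ⟨x₀, p₀⟩ := z₀
  funext z
  obtain ⟨x, p⟩ := z
  simp only [Tph, Vphi, TSch, symForm, Prod.mk_sub_mk, Pi.sub_apply]
  refine helper_Vphi _ _ _ _ _ _ x₀ fun x' => ?_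
  rw [show x - (x' + x₀) = x - x₀ - x' from by rw [sub_add_eq_sub_sub, sub_right_comm],
    show x' + x₀ - x₀ = x' from add_sub_cancel_right x' x₀]
  simp only [Pi.add_apply]
  have h2 : (Complex.I / (hbar : ℂ)) = 2 * (Complex.I / (2 * hbar)) := by
    rw [mul_div_assoc']
    exact (mul_div_mul_left Complex.I (hbar : ℂ) two_ne_zero).symm
  have hexp : ∀ a b c d e f : ℂ, a + b + c = d + (e + f) →
      cexp a * cexp b * cexp c = cexp d * (cexp e * cexp f) := by
    intro a b c d e f h
    rw [← Complex.exp_add, ← Complex.exp_add, ← Complex.exp_add, ← Complex.exp_add, h]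
  have key := hexp
    (-(Complex.I / (2 * hbar)) * ((∑ i, p i * x₀ i - ∑ i, p₀ i * x i : ℝ) : ℂ))
    (-(Complex.I / (2 * hbar)) * ((∑ i, (p i - p₀ i) * (x i - x₀ i) : ℝ) : ℂ))
    ((Complex.I / hbar) * ((∑ i, (p i - p₀ i) * (x i - x₀ i - x' i) : ℝ) : ℂ))
    (-(Complex.I / (2 * hbar)) * ((∑ i, p i * x i : ℝ) : ℂ))
    ((Complex.I / hbar) * ((∑ i, p i * (x i - (x' i + x₀ i)) : ℝ) : ℂ))
    ((Complex.I / hbar) * ((∑ i, p₀ i * (x' i + x₀ i) - 1 / 2 * ∑ i, p₀ i * x₀ i : ℝ) : ℂ))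
    (by
      rw [h2]
      push_cast
      simp only [sub_mul, mul_sub, mul_add, Finset.sum_sub_distrib, Finset.sum_add_distrib]
      ring)
  linear_combination (φ (x - x₀ - x') * ψ x') * key
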